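/- arXiv:1402.6560 — 2 statements merged into one kernel-verified Lean document; each statement's English description precedes it below -/
import Mathlib

section
/- N-ary solution-extension lemma: let ℰ be piecewise extensible, φ = φ_ρ × ∏_{i=1}^m φᵢ with dᵢ = d(φᵢ), d_ρ = d(φ_ρ), rᵢ = dᵢ ∧ (⋁_{j≠i} d_j), and suppose d_ρ ≥ ⋁ᵢ rᵢ. Given x ∈ c_{φ^{↓d_ρ}}, for each i an extension yᵢ ∈ E_{φᵢ}(x_{d_ρ∧dᵢ}), and z a merger of x and y₁,…,y_m (i.e., z_{d_ρ} = x and z_{dᵢ} = yᵢ for each i), then z ∈ c_φ. -/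
/-!
Piecewise extensibility, applied once per factor along the fold defining `prodFin`, turns a
configuration whose restrictions to the scopes `dᵢ` extend the corresponding pieces of `x` into
an extension of `x` to the whole product: the overlap of each new factor with the earlier ones
is some `rᵢ`, hence lies in the scope of `x`. One more binary step adds `φ_ρ`, whose own
extension of `x` is `x` itself. Finally the two-step condition through `d_ρ` splits membership
in `c_φ = E_φ(⋄)` into `z_{d_ρ} = x ∈ c_{φ^{↓d_ρ}}` and `z ∈ E_φ(x)`.
-/

/-- A valuation algebra over a lattice `D` (axioms A1–A6). -/
structure ValuationAlgebra (Φ : Type*) (D : Type*) [Lattice D] [OrderBot D] where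
  dom : Φ → D
  comb : Φ → Φ → Φ
  proj : Φ → D → Φ
  /-- A1: commutativity. -/
  comb_comm : ∀ φ ψ, comb φ ψ = comb ψ φ
  /-- A1: associativity. -/
  comb_assoc : ∀ φ ψ χ, comb (comb φ ψ) χ = comb φ (comb ψ χ)
  /-- A2: labeling. -/
  dom_comb : ∀ φ ψ, dom (comb φ ψ) = dom φ ⊔ dom ψ
  /-- A3: projection. -/
  dom_proj : ∀ φ x, x ≤ dom φ → dom (proj φ x) = x
  /-- A4: transitivity. -/
  proj_trans : ∀ φ x y, x ≤ y → y ≤ dom φ → proj (proj φ y) x = proj φ x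
  /-- A5: combination. -/
  comb_proj : ∀ φ ψ z, dom φ ≤ z → z ≤ dom φ ⊔ dom ψ →
      proj (comb ψ φ) z = comb φ (proj ψ (z ⊓ dom ψ))
  /-- A6: domain. -/
  proj_dom : ∀ φ, proj φ (dom φ) = φ

/-- A configuration system over a lattice `D`: mutually exclusive configuration
sets `Γ s` with surjective, compatible projections, and `Γ ⊥ = {⋄}`. -/
structure ConfigSystem (D : Type*) [Lattice D] [OrderBot D] (Γ : D → Type*) where
  cproj : ∀ {s t : D}, s ≤ t → Γ t → Γ s
  cproj_surj : ∀ {s t : D} (h : s ≤ t), Function.Surjective (cproj h)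
  cproj_comp : ∀ {s t u : D} (h₁ : s ≤ t) (h₂ : t ≤ u) (x : Γ u),
      cproj h₁ (cproj h₂ x) = cproj (h₁.trans h₂) x
  cproj_refl : ∀ {s : D} (x : Γ s), cproj le_rfl x = x
  /-- The empty configuration `⋄`. -/
  diamond : Γ ⊥
  diamond_unique : ∀ x : Γ ⊥, x = diamond

/-- A family of configuration extension sets `E_φ(x) ⊆ Γ_{d(φ)}` for `x ∈ Γ_s`,
`s ≤ d(φ)`, together with the solution concept `c`, satisfying conditions
(1)–(3): identity on the own scope, two-step decomposition through intermediate
scopes, and `c_φ = E_φ(⋄)`.  (The index `d` together with the proof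
`VA.dom φ = d` is used to state the scope of the extension sets.) -/
structure ExtFamily {Φ D : Type*} [Lattice D] [OrderBot D] {Γ : D → Type*}
    (VA : ValuationAlgebra Φ D) (CS : ConfigSystem D Γ) where
  E : ∀ (φ : Φ) {s d : D}, VA.dom φ = d → s ≤ d → Γ s → Set (Γ d)
  sol : ∀ (φ : Φ) {d : D}, VA.dom φ = d → Set (Γ d)
  self_ext : ∀ (φ : Φ) (d : D) (hd : VA.dom φ = d) (x : Γ d),
      E φ hd le_rfl x = {x}
  two_step : ∀ (φ : Φ) (d : D) (hd : VA.dom φ = d) (s t : D)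
      (hst : s ≤ t) (_ : s ≠ t) (htd : t ≤ d) (x : Γ s),
      E φ hd (hst.trans htd) x
        = {y : Γ d | CS.cproj htd y
              ∈ E (VA.proj φ t) (VA.dom_proj φ t (htd.trans_eq hd.symm)) hst x
            ∧ y ∈ E φ hd htd (CS.cproj htd y)}
  sol_eq : ∀ (φ : Φ) (d : D) (hd : VA.dom φ = d),
      sol φ hd = E φ hd bot_le CS.diamond

/-- A configuration system is merge-friendly when configurations agreeing on
the meet of their scopes admit a merger on the join of their scopes. -/
def ConfigSystem.MergeFriendly {D : Type*} [Lattice D] [OrderBot D] {Γ : D → Type*}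
    (CS : ConfigSystem D Γ) : Prop :=
  ∀ (s t : D) (x : Γ s) (y : Γ t),
    CS.cproj inf_le_left x = CS.cproj inf_le_right y →
      ∃ z : Γ (s ⊔ t), CS.cproj le_sup_left z = x ∧ CS.cproj le_sup_right z = y

/-- Piecewise extensibility: a simultaneous extension of `x` to two valuations
is an extension of `x` to their combination. -/
def ExtFamily.PiecewiseExtensible {Φ D : Type*} [Lattice D] [OrderBot D]
    {Γ : D → Type*} {VA : ValuationAlgebra Φ D} {CS : ConfigSystem D Γ}
    (F : ExtFamily VA CS) : Prop :=
  ∀ (φ₁ φ₂ : Φ) (d₁ d₂ : D) (h₁ : VA.dom φ₁ = d₁) (h₂ : VA.dom φ₂ = d₂)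
    (t : D) (ht₁ : d₁ ⊓ d₂ ≤ t) (ht₂ : t ≤ d₁ ⊔ d₂)
    (x : Γ t) (z : Γ (d₁ ⊔ d₂)),
    CS.cproj le_sup_left z ∈ F.E φ₁ h₁ inf_le_right (CS.cproj inf_le_left x) →
    CS.cproj le_sup_right z ∈ F.E φ₂ h₂ inf_le_right (CS.cproj inf_le_left x) →
    z ∈ F.E (VA.comb φ₁ φ₂)
          (show VA.dom (VA.comb φ₁ φ₂) = d₁ ⊔ d₂ by rw [VA.dom_comb, h₁, h₂])
          ht₂ x

/-- The combination `f 0 × f 1 × ⋯ × f n` of finitely many valuations. -/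
def prodFin {Φ D : Type*} [Lattice D] [OrderBot D] (VA : ValuationAlgebra Φ D)
    {n : ℕ} (f : Fin (n + 1) → Φ) : Φ :=
  (List.ofFn fun i : Fin n => f i.succ).foldl VA.comb (f 0)

theorem Fin.sup_univ_castSucc {α : Type*} [SemilatticeSup α] [OrderBot α] {n : ℕ}
    (f : Fin (n + 1) → α) :
    Finset.univ.sup f = (Finset.univ.sup fun i : Fin n => f i.castSucc) ⊔ f (Fin.last n) := by
  rw [Fin.univ_castSuccEmb, Finset.sup_cons, Finset.sup_map, sup_comm]
  rfl

namespace ValuationAlgebra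

variable {Φ D : Type*} [Lattice D] [OrderBot D] (VA : ValuationAlgebra Φ D)

theorem prodFin_zero (f : Fin 1 → Φ) : prodFin VA f = f 0 := by
  simp [prodFin]

theorem prodFin_succ {n : ℕ} (f : Fin (n + 2) → Φ) :
    prodFin VA f = VA.comb (prodFin VA fun i : Fin (n + 1) => f i.castSucc) (f (Fin.last _)) := by
  simp only [prodFin, List.ofFn_succ', List.concat_eq_append, List.foldl_concat]
  rfl

theorem dom_prodFin : ∀ {n : ℕ} (f : Fin (n + 1) → Φ),
    VA.dom (prodFin VA f) = Finset.univ.sup fun i => VA.dom (f i)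
  | 0, f => by simp [prodFin_zero]
  | n + 1, f => by
    rw [prodFin_succ, VA.dom_comb, dom_prodFin, Fin.sup_univ_castSucc fun i => VA.dom (f i)]

end ValuationAlgebra

namespace ExtFamily

variable {Φ D : Type*} [Lattice D] [OrderBot D] {Γ : D → Type*}
  {VA : ValuationAlgebra Φ D} {CS : ConfigSystem D Γ} (F : ExtFamily VA CS)

theorem mem_E_congr {φ φ' : Φ} (e : φ = φ') {s d : D} (hd : VA.dom φ = d)
    (hd' : VA.dom φ' = d) (h : s ≤ d) (x : Γ s) (w : Γ d) :
    w ∈ F.E φ hd h x ↔ w ∈ F.E φ' hd' h x := by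
  subst e; rfl

theorem mem_E_cproj_congr {φ : Φ} {s s' d t : D} (e : s = s') (hd : VA.dom φ = d)
    (h : s ≤ d) (h' : s' ≤ d) (hx : s ≤ t) (hx' : s' ≤ t) (x : Γ t) (w : Γ d) :
    w ∈ F.E φ hd h (CS.cproj hx x) ↔ w ∈ F.E φ hd h' (CS.cproj hx' x) := by
  subst e; rfl

theorem self_mem_E {φ : Φ} {s d : D} (hd : VA.dom φ = d) (h : s ≤ d) (hds : d ≤ s)
    (x : Γ d) : x ∈ F.E φ hd h (CS.cproj h x) := by
  obtain rfl := le_antisymm h hds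
  rw [CS.cproj_refl, F.self_ext]
  rfl

theorem mem_E_cproj_inf {φ : Φ} {s d v u : D} (hd : VA.dom φ = d) (hdv : d ≤ v) (hvu : v ≤ u)
    (x : Γ s) (w : Γ u)
    (hw : CS.cproj (hdv.trans hvu) w ∈ F.E φ hd inf_le_right (CS.cproj inf_le_left x)) :
    CS.cproj hdv (CS.cproj hvu w)
      ∈ F.E φ hd inf_le_right (CS.cproj inf_le_left (CS.cproj (inf_le_left : s ⊓ v ≤ s) x)) := by
  rw [CS.cproj_comp, CS.cproj_comp,
    F.mem_E_cproj_congr (by rw [inf_assoc, inf_eq_right.2 hdv]) hd _ inf_le_right _ inf_le_left]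
  exact hw

theorem mem_sol_of_mem_E {φ : Φ} {s d : D} (hd : VA.dom φ = d) (h : s ≤ d)
    (hps : VA.dom (VA.proj φ s) = s) (x : Γ s) (hx : x ∈ F.sol (VA.proj φ s) hps)
    (z : Γ d) (hz : z ∈ F.E φ hd h x) (hzx : CS.cproj h z = x) : z ∈ F.sol φ hd := by
  rw [F.sol_eq]
  obtain rfl | hs := eq_or_ne s ⊥
  · rwa [CS.diamond_unique x] at hz
  · rw [F.sol_eq] at hx
    refine (Set.ext_iff.1 (F.two_step φ d hd ⊥ s bot_le hs.symm h CS.diamond) z).2 ⟨?_, ?_⟩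
    · rw [hzx]; exact hx
    · rw [hzx]; exact hz

end ExtFamily

namespace ExtFamily.PiecewiseExtensible

variable {Φ D : Type*} [Lattice D] [OrderBot D] {Γ : D → Type*}
  {VA : ValuationAlgebra Φ D} {CS : ConfigSystem D Γ} {F : ExtFamily VA CS}

theorem mem_E_prodFin (hF : F.PiecewiseExtensible) {m : ℕ} (φs : Fin (m + 1) → Φ)
    (d : Fin (m + 1) → D) (hd : ∀ i, VA.dom (φs i) = d i) {s u : D}
    (hu : VA.dom (prodFin VA φs) = u) (hdu : ∀ i, d i ≤ u)
    (hs : ∀ i, d i ⊓ (Finset.univ.erase i).sup d ≤ s) (hsu : s ≤ u) (x : Γ s) (w : Γ u)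
    (hw : ∀ i, CS.cproj (hdu i) w ∈ F.E (φs i) (hd i) inf_le_right (CS.cproj inf_le_left x)) :
    w ∈ F.E (prodFin VA φs) hu hsu x := by
  induction m generalizing s u with
  | zero =>
    obtain rfl : d 0 = u := by rw [← hd, ← VA.prodFin_zero φs, hu]
    rw [F.mem_E_congr (VA.prodFin_zero φs) hu (hd 0)]
    have h0 := (F.mem_E_cproj_congr (inf_eq_left.2 hsu) (hd 0) _ hsu _ le_rfl x _).1 (hw 0)
    rwa [CS.cproj_refl, CS.cproj_refl] at h0
  | succ m ih =>
    set dQ := Finset.univ.sup fun i : Fin (m + 1) => d i.castSucc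
    set Q := prodFin VA fun i : Fin (m + 1) => φs i.castSucc
    have hQ : VA.dom Q = dQ := by simp only [Q, dQ, VA.dom_prodFin, hd]
    obtain rfl : dQ ⊔ d (Fin.last _) = u := by rw [← hu, VA.prodFin_succ, VA.dom_comb, hQ, hd]
    rw [F.mem_E_congr (VA.prodFin_succ φs) hu (by rw [VA.dom_comb, hQ, hd])]
    have hd_le : ∀ i : Fin (m + 1), d i.castSucc ≤ dQ :=
      fun i => Finset.le_sup (f := fun j : Fin (m + 1) => d j.castSucc) (Finset.mem_univ i)
    have hsep : dQ ⊓ d (Fin.last _) ≤ s :=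
      calc _ ≤ (Finset.univ.erase (Fin.last _)).sup d ⊓ d (Fin.last _) :=
            inf_le_inf_right _ <| Finset.sup_le fun i _ => Finset.le_sup <|
              Finset.mem_erase.2 ⟨(Fin.castSucc_lt_last i).ne, Finset.mem_univ _⟩
        _ ≤ s := by rw [inf_comm]; exact hs _
    have hsepQ : ∀ i : Fin (m + 1),
        d i.castSucc ⊓ (Finset.univ.erase i).sup (fun j : Fin (m + 1) => d j.castSucc) ≤ s ⊓ dQ :=
      fun i => le_inf ((inf_le_inf_left _ <| Finset.sup_le fun j hj => Finset.le_sup <|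
          Finset.mem_erase.2 ⟨fun h => (Finset.mem_erase.1 hj).1 (Fin.castSucc_injective _ h),
            Finset.mem_univ _⟩).trans (hs _))
        (inf_le_left.trans (hd_le i))
    refine hF Q _ _ _ hQ (hd _) s hsep hsu x w ?_ (hw _)
    exact ih _ _ (fun i => hd _) hQ hd_le hsepQ inf_le_right _ _
      fun i => F.mem_E_cproj_inf (hd _) (hd_le i) le_sup_left x w (hw _)

end ExtFamily.PiecewiseExtensible

/-- n-ary solution-extension lemma.  Let `ℰ` be piecewise
extensible, `φ = φ_ρ × ∏ᵢ φᵢ` with `dᵢ = d(φᵢ)`, `d_ρ = d(φ_ρ)`,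
`rᵢ = dᵢ ⊓ ⨆_{j≠i} dⱼ`, and suppose `d_ρ ≥ ⨆ᵢ rᵢ`.  Given `x ∈ c_{φ^{↓d_ρ}}`,
extensions `yᵢ ∈ E_{φᵢ}(x_{d_ρ⊓dᵢ})`, and `z` a merger of `x` and the `yᵢ`
(`z_{d_ρ} = x`, `z_{dᵢ} = yᵢ`), we have `z ∈ c_φ`. -/
theorem nary_solution_extension {Φ D : Type*} [Lattice D] [OrderBot D]
    {Γ : D → Type*} (VA : ValuationAlgebra Φ D) (CS : ConfigSystem D Γ)
    (F : ExtFamily VA CS) (hF : F.PiecewiseExtensible)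
    (m : ℕ) (φρ : Φ) (φs : Fin (m + 1) → Φ)
    (dρ : D) (d : Fin (m + 1) → D)
    (hρ : VA.dom φρ = dρ) (hd : ∀ i, VA.dom (φs i) = d i)
    (hsep : Finset.univ.sup (fun i => d i ⊓ (Finset.univ.erase i).sup d) ≤ dρ)
    (hP : VA.dom (prodFin VA φs) = Finset.univ.sup d)
    (x : Γ dρ) (y : ∀ i, Γ (d i)) (z : Γ (dρ ⊔ Finset.univ.sup d))
    (hx : x ∈ F.sol (VA.proj (VA.comb φρ (prodFin VA φs)) dρ)
            (VA.dom_proj (VA.comb φρ (prodFin VA φs)) dρ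
              (by rw [VA.dom_comb, hρ]; exact le_sup_left)))
    (hy : ∀ i, y i ∈ F.E (φs i) (hd i) inf_le_right (CS.cproj inf_le_left x))
    (hzx : CS.cproj le_sup_left z = x)
    (hzy : ∀ i, CS.cproj ((Finset.le_sup (Finset.mem_univ i)).trans le_sup_right) z
            = y i) :
    z ∈ F.sol (VA.comb φρ (prodFin VA φs))
          (show VA.dom (VA.comb φρ (prodFin VA φs)) = dρ ⊔ Finset.univ.sup d by
            rw [VA.dom_comb, hρ, hP]) := by
  have hφ : VA.dom (VA.comb φρ (prodFin VA φs)) = dρ ⊔ Finset.univ.sup d := by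
    rw [VA.dom_comb, hρ, hP]
  have hdu : ∀ i, d i ≤ Finset.univ.sup d := fun i => Finset.le_sup (Finset.mem_univ i)
  have hzP : CS.cproj le_sup_right z
      ∈ F.E (prodFin VA φs) hP inf_le_right (CS.cproj inf_le_left x) :=
    hF.mem_E_prodFin φs d hd hP hdu
      (fun i => le_inf
        ((Finset.le_sup (f := fun j => d j ⊓ (Finset.univ.erase j).sup d) (Finset.mem_univ i)).trans
          hsep)
        (inf_le_left.trans (hdu i)))
      inf_le_right _ _
      fun i => F.mem_E_cproj_inf (hd i) (hdu i) le_sup_right x z (hzy i ▸ hy i)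
  have hzρ : CS.cproj le_sup_left z ∈ F.E φρ hρ inf_le_right (CS.cproj inf_le_left x) :=
    hzx ▸ F.self_mem_E hρ inf_le_right (le_inf le_rfl le_rfl) x
  exact F.mem_sol_of_mem_E hφ le_sup_left _ x hx z
    (hF φρ _ _ _ hρ hP dρ inf_le_left le_sup_left x z hzρ hzP) hzx
end

section
/- Fully piecewise extensibility of the max-plus extension family at the meet scope: for real-valued φ₁ on Ω_{D₁}, φ₂ on Ω_{D₂}, x ∈ Ω_{D₁∩D₂}, and z ∈ Ω_{D₁∪D₂} extending x, z maximizes φ₁⊗φ₂ among extensions of x if and only if z↓D₁ maximizes φ₁ among extensions of x and z↓D₂ maximizes φ₂ among extensions of x. -/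
open Classical

variable {V : Type*} [DecidableEq V]

/-- The set of configurations (tuples) over a finite set `S` of variables with frames `Ω`. -/
abbrev Cfg (Ω : V → Type*) (S : Finset V) := (v : {x // x ∈ S}) → Ω v.1

/-- Restriction (tuple projection) of a configuration to a subset of its domain. -/
def restrict {Ω : V → Type*} {S T : Finset V} (h : S ⊆ T) (x : Cfg Ω T) : Cfg Ω S :=
  fun v => x ⟨v.1, h v.2⟩

/-- Extend a configuration to a larger domain by arbitrary values. -/
noncomputable def extendCfg {Ω : V → Type*} [∀ v, Nonempty (Ω v)] {S T : Finset V}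
    (h : S ⊆ T) (x : Cfg Ω S) : Cfg Ω T :=
  fun v => if hv : v.1 ∈ S then x ⟨v.1, hv⟩ else Classical.arbitrary (Ω v.1)

theorem restrict_extendCfg {Ω : V → Type*} [∀ v, Nonempty (Ω v)] {S T : Finset V}
    (h : S ⊆ T) (x : Cfg Ω S) : restrict h (extendCfg h x) = x := by
  funext v; simp [restrict, extendCfg, v.2]

/-- Projection by maximization: `φ^{↓X}(x) = max { φ(z) : z ∈ Ω_D, z↓X = x }`. -/
noncomputable def projv {Ω : V → Type*} [∀ v, Fintype (Ω v)] [∀ v, Nonempty (Ω v)]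
    [∀ v, DecidableEq (Ω v)] {X D : Finset V} (φ : Cfg Ω D → ℝ) (h : X ⊆ D)
    (x : Cfg Ω X) : ℝ :=
  (Finset.univ.filter fun z : Cfg Ω D => restrict h z = x).sup'
    ⟨extendCfg h x, Finset.mem_filter.mpr ⟨Finset.mem_univ _, restrict_extendCfg h x⟩⟩ φ

/-! The maximum of `φ₁(w↓D₁) + φ₂(w↓D₂)` over the extensions `w` of `x ∈ Ω_{D₁∩D₂}` splits
into the two separate maxima: the coordinates in `D₁ \ D₂` and in `D₂ \ D₁` vary independently, so
maximizers of `φ₁` and of `φ₂` over extensions of `x` glue to a maximizer of the sum. Since each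
summand at `z` is bounded by its own maximum, the sum attains the sum of the maxima exactly when
both summands attain theirs. -/

lemma restrict_restrict {V : Type*} {Ω : V → Type*} {S T U : Finset V} (h₁ : S ⊆ T) (h₂ : T ⊆ U)
    (x : Cfg Ω U) : restrict h₁ (restrict h₂ x) = restrict (h₁.trans h₂) x :=
  rfl

/-- The max-plus combination `φ₁ ⊗ φ₂`. -/
def combine {Ω : V → Type*} {D₁ D₂ : Finset V} (φ₁ : Cfg Ω D₁ → ℝ) (φ₂ : Cfg Ω D₂ → ℝ)
    (w : Cfg Ω (D₁ ∪ D₂)) : ℝ :=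
  φ₁ (restrict Finset.subset_union_left w) + φ₂ (restrict Finset.subset_union_right w)

section Glue

variable {Ω : V → Type*} {D₁ D₂ : Finset V}

def glue (y₁ : Cfg Ω D₁) (y₂ : Cfg Ω D₂) : Cfg Ω (D₁ ∪ D₂) :=
  fun v => if h : v.1 ∈ D₁ then y₁ ⟨v.1, h⟩
    else y₂ ⟨v.1, (Finset.mem_union.mp v.2).resolve_left h⟩

lemma restrict_glue_left (y₁ : Cfg Ω D₁) (y₂ : Cfg Ω D₂) :
    restrict Finset.subset_union_left (glue y₁ y₂) = y₁ := by
  funext v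
  simp [restrict, glue, v.2]

lemma restrict_glue_right {y₁ : Cfg Ω D₁} {y₂ : Cfg Ω D₂}
    (hagree : restrict Finset.inter_subset_left y₁ = restrict Finset.inter_subset_right y₂) :
    restrict Finset.subset_union_right (glue y₁ y₂) = y₂ := by
  funext v
  by_cases hv : v.1 ∈ D₁
  · have hvv := congrFun hagree ⟨v.1, Finset.mem_inter.mpr ⟨hv, v.2⟩⟩
    simpa [restrict, glue, hv] using hvv
  · simp [restrict, glue, hv]

end Glue

section Projv

variable {Ω : V → Type*} [∀ v, Fintype (Ω v)] [∀ v, Nonempty (Ω v)]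
  [∀ v, DecidableEq (Ω v)] {X D : Finset V}

lemma le_projv (φ : Cfg Ω D → ℝ) (h : X ⊆ D) {x : Cfg Ω X} {y : Cfg Ω D}
    (hy : restrict h y = x) : φ y ≤ projv φ h x :=
  Finset.le_sup' φ (Finset.mem_filter.mpr ⟨Finset.mem_univ _, hy⟩)

lemma projv_le_iff {φ : Cfg Ω D → ℝ} {h : X ⊆ D} {x : Cfg Ω X} {c : ℝ} :
    projv φ h x ≤ c ↔ ∀ y, restrict h y = x → φ y ≤ c := by
  unfold projv
  exact (Finset.sup'_le_iff _ _).trans (by simp)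

lemma exists_restrict_eq_and_projv_eq (φ : Cfg Ω D → ℝ) (h : X ⊆ D) (x : Cfg Ω X) :
    ∃ y, restrict h y = x ∧ projv φ h x = φ y := by
  obtain ⟨y, hy, hmax⟩ := Finset.exists_mem_eq_sup' _ φ
  exact ⟨y, (Finset.mem_filter.mp hy).2, hmax⟩

lemma projv_combine_inter {D₁ D₂ : Finset V} (φ₁ : Cfg Ω D₁ → ℝ) (φ₂ : Cfg Ω D₂ → ℝ)
    (x : Cfg Ω (D₁ ∩ D₂)) :
    projv (combine φ₁ φ₂) (Finset.inter_subset_left.trans Finset.subset_union_left) x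
      = projv φ₁ Finset.inter_subset_left x + projv φ₂ Finset.inter_subset_right x := by
  refine le_antisymm (projv_le_iff.mpr fun w hw => ?_) ?_
  · exact add_le_add (le_projv φ₁ _ ((restrict_restrict _ _ w).trans hw))
      (le_projv φ₂ _ ((restrict_restrict _ _ w).trans hw))
  · obtain ⟨y₁, hy₁, hmax₁⟩ := exists_restrict_eq_and_projv_eq φ₁ Finset.inter_subset_left x
    obtain ⟨y₂, hy₂, hmax₂⟩ := exists_restrict_eq_and_projv_eq φ₂ Finset.inter_subset_right x
    have hglue : restrict (Finset.inter_subset_left.trans Finset.subset_union_left)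
        (glue y₁ y₂) = x := by
      rw [← restrict_restrict Finset.inter_subset_left Finset.subset_union_left,
        restrict_glue_left, hy₁]
    calc projv φ₁ _ x + projv φ₂ _ x = φ₁ y₁ + φ₂ y₂ := by rw [hmax₁, hmax₂]
      _ = combine φ₁ φ₂ (glue y₁ y₂) := by
        rw [combine, restrict_glue_left, restrict_glue_right (hy₁.trans hy₂.symm)]
      _ ≤ projv (combine φ₁ φ₂) _ x := le_projv _ _ hglue

end Projv

/-- fully piecewise extensibility of the max-plus extension
family at the meet scope: for `z ∈ Ω_{D₁∪D₂}` extending `x ∈ Ω_{D₁∩D₂}`, `z`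
maximizes `φ₁⊗φ₂` among extensions of `x` if and only if `z↓D₁` maximizes `φ₁`
among extensions of `x` and `z↓D₂` maximizes `φ₂` among extensions of `x`. -/
theorem maxplus_fully_piecewise_extensible
    {V : Type*} [DecidableEq V] {Ω : V → Type*} [∀ v, Fintype (Ω v)]
    [∀ v, Nonempty (Ω v)] [∀ v, DecidableEq (Ω v)] {D₁ D₂ : Finset V}
    (φ₁ : Cfg Ω D₁ → ℝ) (φ₂ : Cfg Ω D₂ → ℝ)
    (x : Cfg Ω (D₁ ∩ D₂)) (z : Cfg Ω (D₁ ∪ D₂))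
    (hz : restrict (Finset.inter_subset_left.trans Finset.subset_union_left :
            D₁ ∩ D₂ ⊆ D₁ ∪ D₂) z = x) :
    (φ₁ (restrict Finset.subset_union_left z) + φ₂ (restrict Finset.subset_union_right z)
        = projv (fun w : Cfg Ω (D₁ ∪ D₂) =>
              φ₁ (restrict Finset.subset_union_left w)
                + φ₂ (restrict Finset.subset_union_right w))
            (Finset.inter_subset_left.trans Finset.subset_union_left) x)
    ↔ (φ₁ (restrict Finset.subset_union_left z) = projv φ₁ Finset.inter_subset_left x
        ∧ φ₂ (restrict Finset.subset_union_right z)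
            = projv φ₂ Finset.inter_subset_right x) := by
  have hmax := projv_combine_inter φ₁ φ₂ x
  unfold combine at hmax
  rw [hmax]
  exact add_eq_add_iff_eq_and_eq (le_projv φ₁ _ ((restrict_restrict _ _ z).trans hz))
    (le_projv φ₂ _ ((restrict_restrict _ _ z).trans hz))
end
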